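/- arXiv:2203.05710 — 5 statements merged into one kernel-verified Lean document; each statement's English description precedes it below -/
import Mathlib

section
/- A linear map Φ : Mₙ(ℂ) → Mₙ(ℂ) is completely positive if and only if its Choi matrix Ch(Φ) = Σ_{i,j} E_{ij} ⊗ Φ(E_{ij}) ∈ Mₙ ⊗ Mₙ is positive semidefinite. -/
open scoped Kronecker ComplexOrder

/-- The amplification `id_{M_k} ⊗ Φ` of a map `Φ : Mₙ(ℂ) → Mₙ(ℂ)`, acting on
`M_k ⊗ Mₙ`, realized as matrices indexed by `Fin k × Fin n`. -/
def ampl {n : ℕ} (Φ : Matrix (Fin n) (Fin n) ℂ → Matrix (Fin n) (Fin n) ℂ)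
    (k : ℕ) (M : Matrix (Fin k × Fin n) (Fin k × Fin n) ℂ) :
    Matrix (Fin k × Fin n) (Fin k × Fin n) ℂ :=
  Matrix.of fun p q => Φ (Matrix.of fun a b => M (p.1, a) (q.1, b)) p.2 q.2

/-- `Φ` is completely positive: every amplification maps positive semidefinite
matrices to positive semidefinite matrices. -/
def IsCP {n : ℕ} (Φ : Matrix (Fin n) (Fin n) ℂ → Matrix (Fin n) (Fin n) ℂ) : Prop :=
  ∀ (k : ℕ) (M : Matrix (Fin k × Fin n) (Fin k × Fin n) ℂ),
    M.PosSemidef → (ampl Φ k M).PosSemidef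

/-- The operator norm of a matrix, viewed as an operator on ℓ²(Fin n). -/
noncomputable def opNorm {n : ℕ} (A : Matrix (Fin n) (Fin n) ℂ) : ℝ :=
  ‖Matrix.toEuclideanCLM (𝕜 := ℂ) A‖

/-! `Ch(Φ) = (id ⊗ Φ)(Ch(id))`, and `Ch(id)` is the rank-one projector onto `∑ᵢ eᵢ ⊗ eᵢ`, so
complete positivity forces `Ch(Φ) ≥ 0`. Conversely, writing `Ch(Φ) = ∑ᵣ vᵣ vᵣ*` and reshaping each
`vᵣ` into a matrix `Kᵣ` gives a map `A ↦ ∑ᵣ Kᵣ A Kᵣ*` with the same Choi matrix, hence equal to `Φ`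
by linearity; its amplifications are sums of congruences `M ↦ (1 ⊗ Kᵣ) M (1 ⊗ Kᵣ)*`, hence
positive. -/

open Matrix

section Choi

variable {R m : Type*} [CommSemiring R] [Fintype m] [DecidableEq m]

def choiMatrix (Φ : Matrix m m R → Matrix m m R) : Matrix (m × m) (m × m) R :=
  ∑ i, ∑ j, single i j 1 ⊗ₖ Φ (single i j 1)

@[simp]
lemma choiMatrix_apply (Φ : Matrix m m R → Matrix m m R) (i j a b : m) :
    choiMatrix Φ (i, a) (j, b) = Φ (single i j 1) a b := by
  simp [choiMatrix, Matrix.sum_apply, single, ite_and]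

lemma LinearMap.ext_of_choiMatrix {Φ Ψ : Matrix m m R →ₗ[R] Matrix m m R}
    (h : choiMatrix Φ = choiMatrix Ψ) : Φ = Ψ := by
  refine (stdBasis R m m).ext ?_
  rintro ⟨i, j⟩
  ext a b
  simpa [stdBasis_eq_single] using congr($h (i, a) (j, b))

variable [StarRing R] {ι : Type*} [Fintype ι]

def krausMap (K : ι → Matrix m m R) : Matrix m m R →ₗ[R] Matrix m m R where
  toFun A := ∑ r, K r * A * (K r)ᴴ
  map_add' A B := by simp [mul_add, add_mul, Finset.sum_add_distrib]
  map_smul' c A := by simp [Finset.smul_sum]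

lemma choiMatrix_krausMap (v : ι → m × m → R) :
    choiMatrix (krausMap fun r => of fun a i => v r (i, a)) =
      ∑ r, vecMulVec (v r) (star (v r)) := by
  ext ⟨i, a⟩ ⟨j, b⟩
  simp [krausMap, Matrix.sum_apply, mul_apply, single, vecMulVec_apply, ite_and]

lemma choiMatrix_id :
    choiMatrix (id : Matrix m m R → Matrix m m R) =
      vecMulVec (fun p => if p.1 = p.2 then 1 else 0)
        (star fun p => if p.1 = p.2 then 1 else 0) := by
  ext ⟨i, a⟩ ⟨j, b⟩
  simp only [choiMatrix_apply, id, single, of_apply, vecMulVec_apply, Pi.star_apply,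
    apply_ite star, star_one, star_zero, ite_zero_mul_ite_zero, mul_one]

end Choi

lemma posSemidef_choiMatrix_id {R m : Type*} [CommRing R] [PartialOrder R] [StarRing R]
    [StarOrderedRing R] [Fintype m] [DecidableEq m] :
    (choiMatrix (id : Matrix m m R → Matrix m m R)).PosSemidef := by
  rw [choiMatrix_id]
  exact posSemidef_vecMulVec_self_star _

lemma choiMatrix_eq_ampl {n : ℕ} (Φ : Matrix (Fin n) (Fin n) ℂ → Matrix (Fin n) (Fin n) ℂ) :
    choiMatrix Φ = ampl Φ n (choiMatrix id) := by
  ext ⟨i, a⟩ ⟨j, b⟩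
  simp [ampl]
  rfl

lemma ampl_krausMap {n k : ℕ} {ι : Type*} [Fintype ι] (K : ι → Matrix (Fin n) (Fin n) ℂ)
    (M : Matrix (Fin k × Fin n) (Fin k × Fin n) ℂ) :
    ampl (krausMap K) k M = ∑ r, (1 ⊗ₖ K r) * M * (1 ⊗ₖ K r)ᴴ := by
  ext ⟨p, a⟩ ⟨q, b⟩
  simp [ampl, krausMap, Matrix.sum_apply, mul_apply, Fintype.sum_prod_type, one_apply,
    apply_ite (starRingEnd ℂ), ite_mul, mul_ite]

lemma isCP_krausMap {n : ℕ} {ι : Type*} [Fintype ι] (K : ι → Matrix (Fin n) (Fin n) ℂ) :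
    IsCP (krausMap K) := fun _ M hM =>
  ampl_krausMap K M ▸ posSemidef_sum _ fun _ _ => hM.mul_mul_conjTranspose_same _

/-- A linear map Φ : Mₙ(ℂ) → Mₙ(ℂ) is completely positive iff its Choi matrix
Σ_{i,j} E_{ij} ⊗ Φ(E_{ij}) is positive semidefinite. -/
theorem cp_iff_choi_posSemidef {n : ℕ}
    (Φ : Matrix (Fin n) (Fin n) ℂ → Matrix (Fin n) (Fin n) ℂ)
    (hΦ : IsLinearMap ℂ Φ) :
    IsCP Φ ↔
      (∑ i : Fin n, ∑ j : Fin n,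
        Matrix.single i j (1 : ℂ) ⊗ₖ Φ (Matrix.single i j (1 : ℂ))).PosSemidef := by
  change IsCP Φ ↔ (choiMatrix Φ).PosSemidef
  refine ⟨fun hCP => choiMatrix_eq_ampl Φ ▸ hCP n _ posSemidef_choiMatrix_id, fun hC => ?_⟩
  obtain ⟨r, v, hv⟩ := posSemidef_iff_eq_sum_vecMulVec.mp hC
  have hKraus : hΦ.mk' Φ = krausMap fun s => of fun a i => v s (i, a) :=
    LinearMap.ext_of_choiMatrix ((choiMatrix_krausMap v).symm ▸ hv)
  change IsCP (hΦ.mk' Φ)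
  rw [hKraus]
  exact isCP_krausMap _
end

section
/- Let X₀ ⊂ X and Y₀ ⊂ Y be inclusions of operator spaces, and let α be a reasonable operator space tensor norm. If u : X → X₀ and v : Y → Y₀ are completely bounded with ‖u‖_cb = ‖v‖_cb = 1, ‖u − λ·id_X‖_cb ≤ 1 − λ and ‖v − μ·id_Y‖_cb ≤ 1 − μ for some λ, μ ∈ [0,1], then ‖u ⊗ v − λμ·id_{X⊗Y}‖_cb ≤ 1 − λμ on X ⊗_α Y. Consequently Ind_CB(X ⊗_α Y : X₀ ⊗_rel Y₀) ≤ Ind_CB(X : X₀)·Ind_CB(Y : Y₀). -/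
namespace LinearMap

variable {R M N P : Type*} [CommRing R] [AddCommGroup M] [AddCommGroup N] [AddCommGroup P]
  [Module R M] [Module R N] [Module R P]

theorem sub_mul_smul_apply₂_eq (T : M →ₗ[R] N →ₗ[R] P) (a x : M) (b y : N) (r s : R) :
    T x y - (r * s) • T a b = T (x - r • a) y + r • T a (y - s • b) := by
  simp only [map_sub, map_smul, sub_apply, smul_apply, smul_sub, smul_smul]
  abel

theorem norm_sub_mul_smul_apply₂_le {𝕜 E F G : Type*} [NormedField 𝕜]
    [SeminormedAddCommGroup E] [NormedSpace 𝕜 E] [SeminormedAddCommGroup F] [NormedSpace 𝕜 F]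
    [SeminormedAddCommGroup G] [NormedSpace 𝕜 G] (T : E →ₗ[𝕜] F →ₗ[𝕜] G)
    (hT : ∀ x y, ‖T x y‖ ≤ ‖x‖ * ‖y‖) (a x : E) (b y : F) (r s : 𝕜) :
    ‖T x y - (r * s) • T a b‖ ≤ ‖x - r • a‖ * ‖y‖ + ‖r‖ * (‖a‖ * ‖y - s • b‖) := by
  rw [sub_mul_smul_apply₂_eq]
  calc ‖T (x - r • a) y + r • T a (y - s • b)‖
      ≤ ‖T (x - r • a) y‖ + ‖r‖ * ‖T a (y - s • b)‖ := by
        rw [← norm_smul]; exact norm_add_le _ _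
    _ ≤ ‖x - r • a‖ * ‖y‖ + ‖r‖ * (‖a‖ * ‖y - s • b‖) := by
        gcongr <;> exact hT _ _

end LinearMap

theorem cb_index_submultiplicative_norm_ineq_general
    {X Y Z : Type*}
    [NormedAddCommGroup X] [NormedSpace ℂ X]
    [NormedAddCommGroup Y] [NormedSpace ℂ Y]
    [NormedAddCommGroup Z] [NormedSpace ℂ Z]
    (T : (X →L[ℂ] X) →ₗ[ℂ] (Y →L[ℂ] Y) →ₗ[ℂ] (Z →L[ℂ] Z))
    (hreasonable : ∀ (u : X →L[ℂ] X) (v : Y →L[ℂ] Y), ‖T u v‖ = ‖u‖ * ‖v‖)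
    (hid : T (ContinuousLinearMap.id ℂ X) (ContinuousLinearMap.id ℂ Y) =
      ContinuousLinearMap.id ℂ Z)
    (u : X →L[ℂ] X) (v : Y →L[ℂ] Y) (l m : ℝ)
    (hl : l ∈ Set.Icc (0 : ℝ) 1)
    (hv : ‖v‖ = 1)
    (hul : ‖u - (l : ℂ) • ContinuousLinearMap.id ℂ X‖ ≤ 1 - l)
    (hvm : ‖v - (m : ℂ) • ContinuousLinearMap.id ℂ Y‖ ≤ 1 - m) :
    ‖T u v - ((l * m : ℝ) : ℂ) • ContinuousLinearMap.id ℂ Z‖ ≤ 1 - l * m := by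
  have hl_norm : ‖(l : ℂ)‖ = l := by simp [abs_of_nonneg hl.1]
  rw [← hid, Complex.ofReal_mul]
  calc _ ≤ ‖u - (l : ℂ) • ContinuousLinearMap.id ℂ X‖ * ‖v‖ + ‖(l : ℂ)‖ *
        (‖ContinuousLinearMap.id ℂ X‖ * ‖v - (m : ℂ) • ContinuousLinearMap.id ℂ Y‖) :=
        T.norm_sub_mul_smul_apply₂_le (fun x y ↦ (hreasonable x y).le) _ _ _ _ _ _
    _ ≤ (1 - l) * 1 + l * (1 * (1 - m)) := by
        rw [hv, hl_norm]
        gcongr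
        · exact hl.1
        · exact ContinuousLinearMap.norm_id_le
    _ = 1 - l * m := by ring

/-- Abstract form of the key norm inequality for the CB-index under a reasonable
operator space tensor norm: if `T` is the (bilinear) tensoring of operators on
`X` and `Y` into operators on `Z = X ⊗_α Y`, satisfying `‖T u v‖ = ‖u‖‖v‖`
(a "reasonable" tensor norm) and `T id id = id`, and if `‖u‖ = ‖v‖ = 1`,
`‖u − λ·id‖ ≤ 1 − λ`, `‖v − μ·id‖ ≤ 1 − μ` with `λ, μ ∈ [0,1]`, then
`‖T u v − λμ·id‖ ≤ 1 − λμ`.  (Consequently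
`Ind_CB(X ⊗_α Y : X₀ ⊗_rel Y₀) ≤ Ind_CB(X : X₀)·Ind_CB(Y : Y₀)`.) -/
theorem cb_index_submultiplicative_norm_ineq
    {X Y Z : Type*}
    [NormedAddCommGroup X] [NormedSpace ℂ X]
    [NormedAddCommGroup Y] [NormedSpace ℂ Y]
    [NormedAddCommGroup Z] [NormedSpace ℂ Z]
    (T : (X →L[ℂ] X) →ₗ[ℂ] (Y →L[ℂ] Y) →ₗ[ℂ] (Z →L[ℂ] Z))
    (hreasonable : ∀ (u : X →L[ℂ] X) (v : Y →L[ℂ] Y), ‖T u v‖ = ‖u‖ * ‖v‖)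
    (hid : T (ContinuousLinearMap.id ℂ X) (ContinuousLinearMap.id ℂ Y) =
      ContinuousLinearMap.id ℂ Z)
    (u : X →L[ℂ] X) (v : Y →L[ℂ] Y) (l m : ℝ)
    (hl : l ∈ Set.Icc (0 : ℝ) 1) (hm : m ∈ Set.Icc (0 : ℝ) 1)
    (hu : ‖u‖ = 1) (hv : ‖v‖ = 1)
    (hul : ‖u - (l : ℂ) • ContinuousLinearMap.id ℂ X‖ ≤ 1 - l)
    (hvm : ‖v - (m : ℂ) • ContinuousLinearMap.id ℂ Y‖ ≤ 1 - m) :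
    ‖T u v - ((l * m : ℝ) : ℂ) • ContinuousLinearMap.id ℂ Z‖ ≤ 1 - l * m :=
  cb_index_submultiplicative_norm_ineq_general T hreasonable hid u v l m hl hv hul hvm
end

section
/- For the inclusion ℂ·1ₙ ⊂ ℓ∞(n) of Banach spaces (constant sequences in the sup-norm space), the bounded index equals n: Ind_B(ℓ∞(n) : ℂ1ₙ) = n. -/
/-!
A functional `φ` on `ℓ∞(ι)` has norm `∑ i, ‖φ eᵢ‖` (with `eᵢ = Pi.single i 1`), and a map `T`
with values in the constants has the norm of any of its rows `φ = T(·) j`. Row `j` of `T - id` is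
`φ - proj j`, whose norm is `‖φ‖ - ‖φ eⱼ‖ + ‖φ eⱼ - 1‖`, so `‖T - id‖ ≤ ‖T‖ - 1` forces
`‖φ eⱼ - 1‖ ≤ ‖φ eⱼ‖ - 1`, i.e. `1 ≤ re (φ eⱼ)` for every `j`; hence `card ι ≤ re (φ 1) ≤ ‖T‖`.
The summing map `x ↦ (∑ i, x i, …, ∑ i, x i)` attains this bound.
-/

open Finset

namespace ContinuousLinearMap

variable {𝕜 : Type*} [RCLike 𝕜] {ι : Type*} [Fintype ι]

theorem apply_eq_sum_mul_apply_single [DecidableEq ι] (φ : (ι → 𝕜) →L[𝕜] 𝕜) (x : ι → 𝕜) :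
    φ x = ∑ i, x i * φ (Pi.single i 1) := by
  conv_lhs => rw [pi_eq_sum_univ' x]
  simp only [map_sum, map_smul, smul_eq_mul]

theorem opNorm_eq_sum_norm_apply_single [DecidableEq ι] (φ : (ι → 𝕜) →L[𝕜] 𝕜) :
    ‖φ‖ = ∑ i, ‖φ (Pi.single i 1)‖ := by
  set c : ι → 𝕜 := fun i => φ (Pi.single i 1)
  apply le_antisymm
  · refine φ.opNorm_le_bound (by positivity) fun x => ?_
    rw [apply_eq_sum_mul_apply_single, sum_mul]
    refine (norm_sum_le _ _).trans (sum_le_sum fun i _ => ?_)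
    rw [norm_mul, mul_comm]
    gcongr
    exact norm_le_pi_norm x i
  · -- `x i * c i = ‖c i‖`; where `c i = 0` the junk value `0 / 0 = 0` still gives this.
    let x : ι → 𝕜 := fun i => starRingEnd 𝕜 (c i) / ‖c i‖
    have hx : ‖x‖ ≤ 1 := (pi_norm_le_iff_of_nonneg zero_le_one).2 fun i => by
      simp [x, norm_div, div_self_le_one]
    have hφx : φ x = ((∑ i, ‖c i‖ : ℝ) : 𝕜) := by
      rw [apply_eq_sum_mul_apply_single]
      push_cast
      refine sum_congr rfl fun i _ => ?_
      rw [div_mul_eq_mul_div, RCLike.conj_mul, sq, mul_self_div_self]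
    calc ∑ i, ‖c i‖ = ‖φ x‖ := by
          rw [hφx, RCLike.norm_ofReal, abs_of_nonneg (by positivity)]
      _ ≤ ‖φ‖ * ‖x‖ := φ.le_opNorm x
      _ ≤ ‖φ‖ := mul_le_of_le_one_right (norm_nonneg _) hx

variable {E F : Type*} [SeminormedAddCommGroup E] [NormedSpace 𝕜 E]
  [SeminormedAddCommGroup F] [NormedSpace 𝕜 F]

theorem norm_proj_comp_le (S : E →L[𝕜] (ι → F)) (j : ι) : ‖(proj j).comp S‖ ≤ ‖S‖ :=
  opNorm_le_bound _ (norm_nonneg _) fun x => (norm_le_pi_norm (S x) j).trans (S.le_opNorm x)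

theorem opNorm_eq_norm_proj_comp_of_apply_eq (T : E →L[𝕜] (ι → F))
    (hT : ∀ x j k, T x j = T x k) (j : ι) : ‖T‖ = ‖(proj j).comp T‖ := by
  have : Nonempty ι := ⟨j⟩
  refine le_antisymm (T.opNorm_le_bound (norm_nonneg _) fun x => ?_) (norm_proj_comp_le T j)
  have hconst : T x = fun _ => T x j := funext fun k => hT x k j
  rw [hconst, pi_norm_const]
  exact ((proj j).comp T).le_opNorm x

end ContinuousLinearMap

theorem RCLike.one_le_re_of_norm_sub_one_le {𝕜 : Type*} [RCLike 𝕜] {z : 𝕜}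
    (h : ‖z - 1‖ ≤ ‖z‖ - 1) : 1 ≤ re z := by
  have hsq : ‖z - 1‖ ^ 2 ≤ (‖z‖ - 1) ^ 2 := pow_le_pow_left₀ (norm_nonneg _) h 2
  have hz : ‖z‖ ^ 2 = re z * re z + im z * im z := RCLike.norm_sq_eq_def
  have hz1 : ‖z - 1‖ ^ 2 = (re z - 1) * (re z - 1) + im z * im z := by
    simp [RCLike.norm_sq_eq_def]
  nlinarith [norm_nonneg (z - 1)]

section BoundedIndex

open ContinuousLinearMap

variable {𝕜 : Type*} [RCLike 𝕜] {ι : Type*} [Fintype ι] [DecidableEq ι]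

theorem card_le_norm_of_norm_sub_id_le (T : (ι → 𝕜) →L[𝕜] (ι → 𝕜))
    (hT : ∀ x j k, T x j = T x k) (h : ‖T - ContinuousLinearMap.id 𝕜 (ι → 𝕜)‖ ≤ ‖T‖ - 1) :
    (Fintype.card ι : ℝ) ≤ ‖T‖ := by
  rcases isEmpty_or_nonempty ι with hι | hι
  · simp
  set j₀ : ι := Classical.arbitrary ι
  set φ := (proj j₀).comp T
  set a : ι → 𝕜 := fun i => φ (Pi.single i 1)
  have hTφ : ‖T‖ = ‖φ‖ := opNorm_eq_norm_proj_comp_of_apply_eq T hT j₀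
  have hrow : ∀ j, ‖a j - 1‖ ≤ ‖a j‖ - 1 := fun j => by
    set ψ : (ι → 𝕜) →L[𝕜] 𝕜 := φ - proj j
    have hcomp : (proj j).comp (T - ContinuousLinearMap.id 𝕜 (ι → 𝕜)) = ψ :=
      ext fun x => by simp [ψ, φ, hT x j j₀]
    have hle := (norm_proj_comp_le (T - ContinuousLinearMap.id 𝕜 (ι → 𝕜)) j).trans h
    rw [hcomp, hTφ, opNorm_eq_sum_norm_apply_single, opNorm_eq_sum_norm_apply_single] at hle
    have hdiff : ∑ i, (‖a i‖ - ‖ψ (Pi.single i 1)‖) = ‖a j‖ - ‖a j - 1‖ := by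
      rw [sum_eq_single j (fun i _ hij => by simp [ψ, a, hij]) (by simp)]
      simp [ψ, a]
    rw [sum_sub_distrib] at hdiff
    linarith
  calc (Fintype.card ι : ℝ) = ∑ _i : ι, (1 : ℝ) := by simp
    _ ≤ ∑ i, RCLike.re (a i) := sum_le_sum fun i _ => RCLike.one_le_re_of_norm_sub_one_le (hrow i)
    _ = RCLike.re (φ 1) := by simp [apply_eq_sum_mul_apply_single φ 1, a]
    _ ≤ ‖φ 1‖ := RCLike.re_le_norm _
    _ ≤ ‖φ‖ := by simpa using φ.le_opNorm 1
    _ = ‖T‖ := hTφ.symm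

theorem exists_norm_sub_id_le_and_norm_eq_card [Nonempty ι] :
    ∃ T : (ι → 𝕜) →L[𝕜] (ι → 𝕜), (∀ x j k, T x j = T x k) ∧
      ‖T - ContinuousLinearMap.id 𝕜 (ι → 𝕜)‖ ≤ ‖T‖ - 1 ∧ ‖T‖ = Fintype.card ι := by
  set σ : (ι → 𝕜) →L[𝕜] 𝕜 := ∑ i, proj i
  set T : (ι → 𝕜) →L[𝕜] (ι → 𝕜) := pi fun _ => σ
  have hT : ‖T‖ = Fintype.card ι := by
    rw [opNorm_eq_norm_proj_comp_of_apply_eq T (fun _ _ _ => rfl) (Classical.arbitrary ι),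
      proj_pi, opNorm_eq_sum_norm_apply_single]
    simp [σ]
  have hrow : ∀ j, ‖σ - proj j‖ = Fintype.card ι - 1 := fun j => by
    rw [opNorm_eq_sum_norm_apply_single]
    simp [σ, Pi.single_apply, apply_ite, sum_ite, filter_ne, card_erase_of_mem,
      Nat.cast_pred Fintype.card_pos]
  have hTsub : T - ContinuousLinearMap.id 𝕜 (ι → 𝕜) = pi fun j => σ - proj j := by
    ext x j
    simp [T]
  refine ⟨T, fun x j k => rfl, ?_, hT⟩
  rw [hTsub, hT]
  exact norm_pi_le_of_le (fun j => (hrow j).le) (sub_nonneg.2 (by exact_mod_cast Fintype.card_pos))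

end BoundedIndex

/-- For the inclusion ℂ·1ₙ ⊂ ℓ∞(n) (constant vectors inside ℂⁿ with the sup
norm), the bounded index equals n: the infimum of ‖T‖ over bounded linear maps
T : ℓ∞(n) → ℂ·1ₙ with ‖T − id‖ ≤ ‖T‖ − 1 is exactly n, and it is attained. -/
theorem bounded_index_linfty_constants (n : ℕ) (hn : 0 < n) :
    IsLeast {r : ℝ | ∃ T : (Fin n → ℂ) →L[ℂ] (Fin n → ℂ),
        (∀ (x : Fin n → ℂ) (j k : Fin n), T x j = T x k) ∧
        ‖T - ContinuousLinearMap.id ℂ (Fin n → ℂ)‖ ≤ ‖T‖ - 1 ∧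
        r = ‖T‖} (n : ℝ) := by
  have : Nonempty (Fin n) := ⟨⟨0, hn⟩⟩
  constructor
  · obtain ⟨T, hT, hid, hnorm⟩ := exists_norm_sub_id_le_and_norm_eq_card (𝕜 := ℂ) (ι := Fin n)
    exact ⟨T, hT, hid, by simp [hnorm]⟩
  · rintro _ ⟨T, hT, hid, rfl⟩
    simpa using card_le_norm_of_norm_sub_id_le T hT hid
end

section
/- For a graph Γ on n vertices with associated matricial system 𝒮_Γ = {X ∈ Mₙ : X_{ij} = 0 whenever i ≁ j} (where i ∼ j iff i = j or (i,j) ∈ E), the CP-index satisfies Ind_CP(Mₙ : 𝒮_Γ) ≤ ϑ(Γ), where ϑ(Γ) = min{max_i B_{ii} : B ∈ 𝒮_Γ, B − Jₙ positive semidefinite} is the Lovász theta number. -/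
open scoped Kronecker ComplexOrder

/-- The matricial operator system 𝒮_Γ ⊂ Mₙ of a graph Γ: matrices supported on
the adjacency pattern (with i ∼ j iff i = j or (i,j) ∈ E). -/
def graphSystem {n : ℕ} (G : SimpleGraph (Fin n)) : Set (Matrix (Fin n) (Fin n) ℂ) :=
  {X | ∀ i j : Fin n, ¬(i = j ∨ G.Adj i j) → X i j = 0}

/-- The all-ones matrix Jₙ. -/
def Jmat (n : ℕ) : Matrix (Fin n) (Fin n) ℂ := Matrix.of fun _ _ => 1

/-- The Lovász theta number ϑ(Γ) = min{max_i B_{ii} : B ∈ 𝒮_Γ, B − Jₙ ⪰ 0}. -/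
noncomputable def lovaszTheta {n : ℕ} (G : SimpleGraph (Fin n)) : ℝ :=
  sInf {r : ℝ | ∃ B ∈ graphSystem G, (B - Jmat n).PosSemidef ∧ r = ⨆ i : Fin n, (B i i).re}

/-- The CP-index Ind_CP(Mₙ : 𝒮) of a subsystem 𝒮 ⊆ Mₙ. -/
noncomputable def indCPMn {n : ℕ} (S : Set (Matrix (Fin n) (Fin n) ℂ)) : ℝ :=
  sInf {r : ℝ | ∃ Φ : Matrix (Fin n) (Fin n) ℂ → Matrix (Fin n) (Fin n) ℂ,
    IsLinearMap ℂ Φ ∧ IsCP Φ ∧ (∀ X, Φ X ∈ S) ∧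
    (∃ c : ℂ, Φ (1 : Matrix (Fin n) (Fin n) ℂ) = c • (1 : Matrix (Fin n) (Fin n) ℂ)) ∧
    IsCP (fun X => Φ X - X) ∧
    r = opNorm (Φ (1 : Matrix (Fin n) (Fin n) ℂ))}

/-!
Let `B` be feasible for `ϑ(Γ)` with largest diagonal entry `r`. Raising every diagonal entry of
`B` to `r` gives `A ∈ 𝒮_Γ` with constant diagonal and still `A - Jₙ ⪰ 0`. The Schur multiplier
`X ↦ A ⊙ X` is then admissible for `Ind_CP(Mₙ : 𝒮_Γ)`: it maps into `𝒮_Γ`, sends `Iₙ` to `r • Iₙ`,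
and both it and its difference with the identity, the Schur multiplier by `A - Jₙ`, are
completely positive by the Schur product theorem, because `A - Jₙ ⪰ 0` and `Jₙ ⪰ 0`.
-/

open Matrix

section

variable {n : ℕ}

theorem posSemidef_Jmat (n : ℕ) : (Jmat n).PosSemidef := by
  simpa [Jmat, vecMulVec] using posSemidef_vecMulVec_self_star (fun _ : Fin n => (1 : ℂ))

theorem Jmat_mul_Jmat (n : ℕ) : Jmat n * Jmat n = (n : ℂ) • Jmat n := by
  ext i j
  simp [Jmat, Matrix.mul_apply]

theorem isStarProjection_inv_smul_Jmat [NeZero n] :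
    IsStarProjection ((n : ℂ)⁻¹ • Jmat n) where
  isIdempotentElem := by
    rw [IsIdempotentElem, smul_mul_smul_comm, Jmat_mul_Jmat, smul_smul, mul_assoc,
      inv_mul_cancel₀ (NeZero.ne _), mul_one]
  isSelfAdjoint := by
    have hJ : star (Jmat n) = Jmat n := (posSemidef_Jmat n).isHermitian
    simp [IsSelfAdjoint, star_smul, hJ]

open scoped MatrixOrder in
theorem posSemidef_natCast_smul_one_sub_Jmat (n : ℕ) [NeZero n] :
    ((n : ℂ) • (1 : Matrix (Fin n) (Fin n) ℂ) - Jmat n).PosSemidef := by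
  have h := nonneg_iff_posSemidef.mp (isStarProjection_inv_smul_Jmat (n := n)).one_sub_nonneg
  have := h.smul (Nat.cast_nonneg (α := ℂ) n)
  rwa [smul_sub, smul_smul, mul_inv_cancel₀ (NeZero.ne (n : ℂ)), one_smul] at this

theorem isCP_hadamard {C : Matrix (Fin n) (Fin n) ℂ} (hC : C.PosSemidef) :
    IsCP (C ⊙ ·) := by
  intro k M hM
  have : ampl (C ⊙ ·) k M = C.submatrix Prod.snd Prod.snd ⊙ M := by
    ext p q; rfl
  rw [this]
  exact (hC.submatrix _).hadamard hM

theorem opNorm_ofReal_smul_one [NeZero n] {r : ℝ} (hr : 0 ≤ r) :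
    opNorm ((r : ℂ) • (1 : Matrix (Fin n) (Fin n) ℂ)) = r := by
  rw [opNorm, map_smul, map_one, norm_smul, norm_one, mul_one, Complex.norm_real,
    Real.norm_of_nonneg hr]

theorem hadamard_mem_graphSystem {G : SimpleGraph (Fin n)} {A : Matrix (Fin n) (Fin n) ℂ}
    (hA : A ∈ graphSystem G) (X : Matrix (Fin n) (Fin n) ℂ) : A ⊙ X ∈ graphSystem G :=
  fun i j hij => by simp [hA i j hij]

theorem indCPMn_le_of_hadamard [NeZero n] {S : Set (Matrix (Fin n) (Fin n) ℂ)}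
    {A : Matrix (Fin n) (Fin n) ℂ} {r : ℝ} (hAJ : (A - Jmat n).PosSemidef)
    (hAS : ∀ X, A ⊙ X ∈ S) (hdiag : ∀ i, A i i = r) : indCPMn S ≤ r := by
  have hA : A.PosSemidef := by simpa using hAJ.add (posSemidef_Jmat n)
  have hr : 0 ≤ r := by simpa [hdiag] using hA.diag_nonneg (i := 0)
  have hA1 : A ⊙ 1 = (r : ℂ) • 1 := by
    ext i j
    rcases eq_or_ne i j with rfl | hij <;> simp [*]
  have hsub : (fun X => A ⊙ X - X) = ((A - Jmat n) ⊙ ·) := by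
    funext X; ext i j; simp [Jmat, sub_mul]
  refine csInf_le ⟨0, ?_⟩
    ⟨(A ⊙ ·), ⟨fun X Y => hadamard_add A X Y, fun c X => hadamard_smul A X c⟩,
    isCP_hadamard hA, hAS, ⟨r, hA1⟩, hsub ▸ isCP_hadamard hAJ, ?_⟩
  · rintro _ ⟨Φ, -, -, -, -, -, rfl⟩
    exact norm_nonneg _
  · simp only [hA1, opNorm_ofReal_smul_one hr]

theorem exists_constDiag_of_re_le {G : SimpleGraph (Fin n)}
    {B : Matrix (Fin n) (Fin n) ℂ} (hB : B ∈ graphSystem G) (hBJ : (B - Jmat n).PosSemidef)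
    {r : ℝ} (hr : ∀ i, (B i i).re ≤ r) :
    ∃ A ∈ graphSystem G, (A - Jmat n).PosSemidef ∧ ∀ i, A i i = r := by
  have hD : (diagonal fun i => (r : ℂ) - B i i).PosSemidef := by
    refine PosSemidef.diagonal fun i => ?_
    have hBi := Complex.le_def.mp (hBJ.diag_nonneg (i := i))
    simp_all [Complex.le_def, Jmat]
  refine ⟨B + diagonal fun i => (r : ℂ) - B i i, fun i j hij => ?_, ?_, fun i => by simp⟩
  · simp [hB i j hij, diagonal_apply_ne _ fun h => hij (Or.inl h)]
  · simpa [add_sub_right_comm] using hBJ.add hD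

end

/-- For a graph Γ on n vertices, Ind_CP(Mₙ : 𝒮_Γ) ≤ ϑ(Γ). -/
theorem indCP_le_lovaszTheta {n : ℕ} (hn : 0 < n) (G : SimpleGraph (Fin n)) :
    indCPMn (graphSystem G) ≤ lovaszTheta G := by
  have : NeZero n := ⟨hn.ne'⟩
  -- `n • Iₙ` is feasible for `ϑ(Γ)`; without a feasible point `sInf` would be the junk value `0`.
  refine le_csInf ⟨n, (n : ℂ) • 1, ?_, posSemidef_natCast_smul_one_sub_Jmat n, by simp⟩ ?_
  · intro i j hij
    simp [one_apply_ne fun h => hij (Or.inl h)]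
  · rintro _ ⟨B, hB, hBJ, rfl⟩
    obtain ⟨A, hA, hAJ, hAdiag⟩ :=
      exists_constDiag_of_re_le hB hBJ fun i =>
        le_ciSup (f := fun i => (B i i).re) (Set.finite_range _).bddAbove i
    exact indCPMn_le_of_hadamard hAJ (hadamard_mem_graphSystem hA) hAdiag
end

section
/- For a graph Γ on n vertices, if φ ∈ CP₁(Mₙ) satisfies φ(Mₙ) ⊆ 𝒮_Γ and φ − id is completely positive, then the matrix A with A_{ij} = φ(E_{ij})_{ij} satisfies: A ∈ 𝒮_Γ, A − Jₙ is positive semidefinite, and max_i A_{ii} ≤ ‖φ(Iₙ)‖; hence ϑ(Γ) ≤ Ind_CP(Mₙ : 𝒮_Γ). -/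
open scoped Kronecker ComplexOrder

/-!
The map `ψ = φ - id` is completely positive, so its Choi matrix `∑ E_ij ⊗ ψ(E_ij)` is positive
semidefinite, and so is its compression `(ψ(E_ij)_ij) = A - J`. Positivity of `φ` on `I - E_ii`
gives `A_ii ≤ φ(I)_ii ≤ ‖φ(I)‖`. Hence every map admissible for `Ind_CP(Mₙ : 𝒮_Γ)` yields a matrix
admissible for `ϑ(Γ)` of value at most `‖φ(I)‖`.
-/

namespace IsCP

variable {n : ℕ} {Φ : Matrix (Fin n) (Fin n) ℂ → Matrix (Fin n) (Fin n) ℂ}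

theorem posSemidef_apply (h : IsCP Φ) {X : Matrix (Fin n) (Fin n) ℂ} (hX : X.PosSemidef) :
    (Φ X).PosSemidef :=
  (h 1 _ (hX.submatrix Prod.snd)).submatrix fun i => ((0 : Fin 1), i)

theorem posSemidef_of_single_apply (h : IsCP Φ) :
    (Matrix.of fun i j => Φ (Matrix.single i j 1) i j).PosSemidef := by
  -- `v = ∑ eᵢ ⊗ eᵢ`, so `vv* = ∑ E_ij ⊗ E_ij` and `ampl Φ n (vv*)` is the Choi matrix of `Φ`.
  let v : Fin n × Fin n → ℂ := fun p => if p.1 = p.2 then 1 else 0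
  have hblock : ∀ i j, (Matrix.of fun a b => Matrix.vecMulVec v (star v) (i, a) (j, b)) =
      Matrix.single i j 1 := by
    intro i j
    ext a b
    by_cases hia : i = a <;> by_cases hjb : j = b <;>
      simp [v, Matrix.vecMulVec_apply, hia, hjb]
  have hchoi := (h n _ (Matrix.posSemidef_vecMulVec_self_star v)).submatrix fun i => (i, i)
  convert hchoi using 1
  ext i j
  simp only [Matrix.submatrix_apply, ampl, Matrix.of_apply, hblock]

end IsCP

theorem Matrix.PosSemidef.re_apply_nonneg {n : Type*} {M : Matrix n n ℂ} (hM : M.PosSemidef)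
    (i : n) : 0 ≤ (M i i).re :=
  (Complex.nonneg_iff.mp hM.diag_nonneg).1

theorem Matrix.posSemidef_one_sub_single_self {n : Type*} [Fintype n] [DecidableEq n] (i : n) :
    ((1 : Matrix n n ℂ) - Matrix.single i i 1).PosSemidef := by
  rw [← Matrix.diagonal_single, ← Matrix.diagonal_one, Matrix.diagonal_sub]
  refine Matrix.PosSemidef.diagonal fun j => ?_
  by_cases hj : j = i <;> simp [hj]

theorem re_apply_le_opNorm {n : ℕ} (A : Matrix (Fin n) (Fin n) ℂ) (i : Fin n) :
    (A i i).re ≤ opNorm A := by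
  let T := Matrix.toEuclideanCLM (𝕜 := ℂ) A
  let e : EuclideanSpace ℂ (Fin n) := EuclideanSpace.single i 1
  have hTe : (T e).ofLp i = A i i := by simp [T, e]
  calc (A i i).re ≤ ‖A i i‖ := Complex.re_le_norm _
    _ = ‖(T e).ofLp i‖ := by rw [hTe]
    _ ≤ ‖T e‖ := PiLp.norm_apply_le _ _
    _ ≤ ‖T‖ * ‖e‖ := T.le_opNorm e
    _ = opNorm A := by simp [e, opNorm, T]

section

variable {n : ℕ} {φ : Matrix (Fin n) (Fin n) ℂ → Matrix (Fin n) (Fin n) ℂ}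

theorem posSemidef_sub_Jmat_of_isCP_sub_id (hdiff : IsCP fun X => φ X - X) :
    ((Matrix.of fun i j => φ (Matrix.single i j 1) i j) - Jmat n).PosSemidef := by
  convert hdiff.posSemidef_of_single_apply using 1
  ext i j
  simp [Jmat]

theorem re_apply_single_le_opNorm (hlin : IsLinearMap ℂ φ) (hcp : IsCP φ) (i : Fin n) :
    (φ (Matrix.single i i 1) i i).re ≤ opNorm (φ 1) := by
  have hle : 0 ≤ (φ (1 - Matrix.single i i 1) i i).re :=
    (hcp.posSemidef_apply (Matrix.posSemidef_one_sub_single_self i)).re_apply_nonneg i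
  have hsub : φ (1 - Matrix.single i i 1) = φ 1 - φ (Matrix.single i i 1) :=
    (hlin.mk' φ).map_sub _ _
  simp only [hsub, Matrix.sub_apply, Complex.sub_re, sub_nonneg] at hle
  exact hle.trans (re_apply_le_opNorm _ i)

end

theorem lovaszTheta_le_iSup_re {n : ℕ} {G : SimpleGraph (Fin n)} {B : Matrix (Fin n) (Fin n) ℂ}
    (hB : B ∈ graphSystem G) (hBJ : (B - Jmat n).PosSemidef) :
    lovaszTheta G ≤ ⨆ i, (B i i).re := by
  refine csInf_le ⟨0, ?_⟩ ⟨B, hB, hBJ, rfl⟩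
  rintro r ⟨B', -, hB'J, rfl⟩
  refine Real.iSup_nonneg fun i => ?_
  have h := hB'J.re_apply_nonneg i
  simp only [Matrix.sub_apply, Jmat, Matrix.of_apply, Complex.sub_re, Complex.one_re] at h
  linarith

theorem lovaszTheta_le_opNorm {n : ℕ} {G : SimpleGraph (Fin n)}
    {φ : Matrix (Fin n) (Fin n) ℂ → Matrix (Fin n) (Fin n) ℂ}
    (hlin : IsLinearMap ℂ φ) (hcp : IsCP φ) (hrange : ∀ X, φ X ∈ graphSystem G)
    (hdiff : IsCP fun X => φ X - X) :
    lovaszTheta G ≤ opNorm (φ 1) :=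
  (lovaszTheta_le_iSup_re (fun i j => hrange _ i j)
      (posSemidef_sub_Jmat_of_isCP_sub_id hdiff)).trans
    (Real.iSup_le (re_apply_single_le_opNorm hlin hcp) (norm_nonneg _))

theorem lovaszTheta_le_indCP_general {n : ℕ} (G : SimpleGraph (Fin n))
    (φ : Matrix (Fin n) (Fin n) ℂ → Matrix (Fin n) (Fin n) ℂ)
    (hlin : IsLinearMap ℂ φ) (hcp : IsCP φ)
    (hrange : ∀ X, φ X ∈ graphSystem G)
    (hunit : ∃ c : ℂ, φ (1 : Matrix (Fin n) (Fin n) ℂ) = c • (1 : Matrix (Fin n) (Fin n) ℂ))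
    (hdiff : IsCP (fun X => φ X - X)) :
    (Matrix.of fun i j : Fin n => φ (Matrix.single i j (1 : ℂ)) i j) ∈
        graphSystem G ∧
    ((Matrix.of fun i j : Fin n => φ (Matrix.single i j (1 : ℂ)) i j) -
        Jmat n).PosSemidef ∧
    (∀ i : Fin n,
      ((Matrix.of fun i j : Fin n => φ (Matrix.single i j (1 : ℂ)) i j) i i).re ≤
        opNorm (φ (1 : Matrix (Fin n) (Fin n) ℂ))) ∧
    lovaszTheta G ≤ indCPMn (graphSystem G) := by
  refine ⟨fun i j => hrange _ i j, posSemidef_sub_Jmat_of_isCP_sub_id hdiff,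
    re_apply_single_le_opNorm hlin hcp, ?_⟩
  refine le_csInf ⟨_, φ, hlin, hcp, hrange, hunit, hdiff, rfl⟩ ?_
  rintro r ⟨Φ, hΦlin, hΦcp, hΦrange, -, hΦdiff, rfl⟩
  exact lovaszTheta_le_opNorm hΦlin hΦcp hΦrange hΦdiff

/-- If φ ∈ CP₁(Mₙ) maps into 𝒮_Γ with φ − id completely positive, then the
matrix A_{ij} = φ(E_{ij})_{ij} lies in 𝒮_Γ, satisfies A − Jₙ ⪰ 0 and
max_i A_{ii} ≤ ‖φ(Iₙ)‖; hence ϑ(Γ) ≤ Ind_CP(Mₙ : 𝒮_Γ). -/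
theorem lovaszTheta_le_indCP {n : ℕ} (hn : 0 < n) (G : SimpleGraph (Fin n))
    (φ : Matrix (Fin n) (Fin n) ℂ → Matrix (Fin n) (Fin n) ℂ)
    (hlin : IsLinearMap ℂ φ) (hcp : IsCP φ)
    (hrange : ∀ X, φ X ∈ graphSystem G)
    (hunit : ∃ c : ℂ, φ (1 : Matrix (Fin n) (Fin n) ℂ) = c • (1 : Matrix (Fin n) (Fin n) ℂ))
    (hdiff : IsCP (fun X => φ X - X)) :
    (Matrix.of fun i j : Fin n => φ (Matrix.single i j (1 : ℂ)) i j) ∈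
        graphSystem G ∧
    ((Matrix.of fun i j : Fin n => φ (Matrix.single i j (1 : ℂ)) i j) -
        Jmat n).PosSemidef ∧
    (∀ i : Fin n,
      ((Matrix.of fun i j : Fin n => φ (Matrix.single i j (1 : ℂ)) i j) i i).re ≤
        opNorm (φ (1 : Matrix (Fin n) (Fin n) ℂ))) ∧
    lovaszTheta G ≤ indCPMn (graphSystem G) :=
  lovaszTheta_le_indCP_general G φ hlin hcp hrange hunit hdiff
end
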